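/- Let f, g : ℝ → ℝ be smooth functions satisfying |f^{(a)}(0)| ≤ C K^a and |g^{(a)}(0)| ≤ C K^a for all a ≥ 0. Define F_k(x) := Σ_{u≥0} f^{(2u+k)}(0) x^u/u! and G_k(x) := Σ_{u≥0} g^{(2u+k)}(0) x^u/u!. Then for σ_ii, σ_jj ≥ 0 and any real σ with |σ| ≤ ε ≤ 1, the tail sum Σ_{k≥2} |F_k(σ_ii/2) G_k(σ_jj/2)| |σ|^k / k! is at most C² ε² e^{K²(σ_ii + σ_jj + 2)/2}. -/

import Mathlib

set_option maxHeartbeats 1000000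

lemma exp_tsum' (x : ℝ) : Real.exp x = ∑' n : ℕ, x ^ n / n.factorial := by
  rw [Real.exp_eq_exp_ℝ, NormedSpace.exp_eq_tsum_div]

lemma Fbound (h : ℝ → ℝ) (C K : ℝ)
    (hder : ∀ a : ℕ, |iteratedDeriv a h 0| ≤ C * K ^ a)
    (k : ℕ) (x : ℝ) (hx : 0 ≤ x) :
    |∑' u : ℕ, iteratedDeriv (2 * u + k) h 0 / (Nat.factorial u) * x ^ u|
      ≤ C * |K| ^ k * Real.exp (K ^ 2 * x) := by
  have hC : 0 ≤ C := by
    have := hder 0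
    simp at this
    exact le_trans (abs_nonneg _) this
  set a : ℕ → ℝ := fun u => iteratedDeriv (2 * u + k) h 0 / (Nat.factorial u) * x ^ u
  set b : ℕ → ℝ := fun u => C * |K| ^ k * ((K ^ 2 * x) ^ u / (Nat.factorial u))
  have hab : ∀ u, |a u| ≤ b u := by
    intro u
    have h1 : |a u| = |iteratedDeriv (2 * u + k) h 0| / (Nat.factorial u) * x ^ u := by
      rw [abs_mul, abs_div, abs_pow, abs_of_nonneg hx, Nat.abs_cast]
    rw [h1]
    have h2 : |iteratedDeriv (2 * u + k) h 0| ≤ C * |K| ^ (2 * u + k) := by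
      refine (hder _).trans (mul_le_mul_of_nonneg_left ?_ hC)
      rw [← abs_pow]; exact le_abs_self _
    have h3 : C * |K| ^ (2 * u + k) / (Nat.factorial u) * x ^ u = b u := by
      rw [pow_add, pow_mul, sq_abs]
      simp only [b]
      ring
    rw [← h3]
    gcongr
  have hsb : Summable b := by
    show Summable fun u => C * |K| ^ k * ((K ^ 2 * x) ^ u / (Nat.factorial u))
    exact (Real.summable_pow_div_factorial (K ^ 2 * x)).mul_left _
  have hsa : Summable fun u => |a u| :=
    Summable.of_nonneg_of_le (fun u => abs_nonneg _) hab hsb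
  have s1 : |∑' u, a u| ≤ ∑' u, |a u| := by
    rw [← Real.norm_eq_abs]
    refine (norm_tsum_le_tsum_norm ?_).trans_eq ?_
    · simpa [Real.norm_eq_abs] using hsa
    · simp [Real.norm_eq_abs]
  refine s1.trans ((Summable.tsum_le_tsum hab hsa hsb).trans_eq ?_)
  rw [tsum_mul_left, ← exp_tsum']


/-- Tail bound for the covariance series: with `F_k, G_k` the auxiliary series of two
smooth functions `f, g` satisfying the derivative growth condition, and `|σ| ≤ ε ≤ 1`,
the tail `Σ_{k≥2} |F_k(σii/2) G_k(σjj/2)| |σ|^k / k!` is at most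
`C² ε² exp(K²(σii + σjj + 2)/2)`. -/
theorem stmt7 (f g : ℝ → ℝ) (C K : ℝ)
    (hf : ContDiff ℝ (⊤ : ℕ∞) f) (hg : ContDiff ℝ (⊤ : ℕ∞) g)
    (hderf : ∀ a : ℕ, |iteratedDeriv a f 0| ≤ C * K ^ a)
    (hderg : ∀ a : ℕ, |iteratedDeriv a g 0| ≤ C * K ^ a)
    (F G : ℕ → ℝ → ℝ)
    (hF : ∀ k x, F k x = ∑' u : ℕ, iteratedDeriv (2 * u + k) f 0 / (Nat.factorial u) * x ^ u)
    (hG : ∀ k x, G k x = ∑' u : ℕ, iteratedDeriv (2 * u + k) g 0 / (Nat.factorial u) * x ^ u)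
    (σii σjj σ ε : ℝ) (hii : 0 ≤ σii) (hjj : 0 ≤ σjj)
    (hσ : |σ| ≤ ε) (hε : ε ≤ 1) :
    (∑' k : ℕ, |F (k + 2) (σii / 2) * G (k + 2) (σjj / 2)| * |σ| ^ (k + 2)
        / (Nat.factorial (k + 2)))
      ≤ C ^ 2 * ε ^ 2 * Real.exp (K ^ 2 * (σii + σjj + 2) / 2) := by
  have hε0 : 0 ≤ ε := le_trans (abs_nonneg _) hσ
  have hC : 0 ≤ C := by
    have := hderf 0
    simp at this
    exact le_trans (abs_nonneg _) this
  set e1 := Real.exp (K ^ 2 * (σii / 2)) with he1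
  set e2 := Real.exp (K ^ 2 * (σjj / 2)) with he2
  set a : ℕ → ℝ := fun k => |F (k + 2) (σii / 2) * G (k + 2) (σjj / 2)| * |σ| ^ (k + 2)
      / (Nat.factorial (k + 2))
  set b : ℕ → ℝ := fun k =>
    C ^ 2 * e1 * e2 * ε ^ 2 * ((K ^ 2) ^ (k + 2) / (Nat.factorial (k + 2)))
  have hFb : ∀ k, |F (k + 2) (σii / 2)| ≤ C * |K| ^ (k + 2) * e1 := by
    intro k; rw [hF]; exact Fbound f C K hderf (k + 2) _ (by linarith)
  have hGb : ∀ k, |G (k + 2) (σjj / 2)| ≤ C * |K| ^ (k + 2) * e2 := by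
    intro k; rw [hG]; exact Fbound g C K hderg (k + 2) _ (by linarith)
  have hab : ∀ k, a k ≤ b k := by
    intro k
    have hσε : |σ| ^ (k + 2) ≤ ε ^ 2 := by
      calc |σ| ^ (k + 2) ≤ ε ^ (k + 2) := by gcongr <;> positivity
        _ ≤ ε ^ 2 := pow_le_pow_of_le_one hε0 hε (by omega)
    have h1 : a k ≤ (C * |K| ^ (k + 2) * e1) * (C * |K| ^ (k + 2) * e2) * ε ^ 2
        / (Nat.factorial (k + 2)) := by
      show |F (k + 2) (σii / 2) * G (k + 2) (σjj / 2)| * |σ| ^ (k + 2)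
          / (Nat.factorial (k + 2)) ≤ _
      rw [abs_mul]
      gcongr <;> first
        | exact hFb k
        | exact hGb k
        | exact hσε
        | positivity
    refine h1.trans_eq ?_
    have hK2 : |K| ^ (k + 2) * |K| ^ (k + 2) = (K ^ 2) ^ (k + 2) := by
      rw [← mul_pow, ← sq_abs]; ring
    show _ = C ^ 2 * e1 * e2 * ε ^ 2 * ((K ^ 2) ^ (k + 2) / (Nat.factorial (k + 2)))
    rw [← hK2]
    field_simp
  have hsb : Summable b := ((Real.summable_pow_div_factorial (K ^ 2)).comp_injective
      (add_left_injective 2)).mul_left _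
  have ha0 : ∀ k, 0 ≤ a k := fun k => by positivity
  have hsa : Summable a := Summable.of_nonneg_of_le ha0 hab hsb
  have htail : (∑' k : ℕ, (K ^ 2) ^ (k + 2) / (Nat.factorial (k + 2))) ≤ Real.exp (K ^ 2) := by
    rw [exp_tsum']
    refine Summable.tsum_le_tsum_of_inj (· + 2) (add_left_injective 2) (fun c _ => by positivity)
      (fun n => le_refl _) ((Real.summable_pow_div_factorial (K ^ 2)).comp_injective
        (add_left_injective 2)) (Real.summable_pow_div_factorial (K ^ 2))
  calc (∑' k, a k) ≤ ∑' k, b k := Summable.tsum_le_tsum hab hsa hsb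
    _ = C ^ 2 * e1 * e2 * ε ^ 2 * ∑' k : ℕ, (K ^ 2) ^ (k + 2) / (Nat.factorial (k + 2)) :=
        tsum_mul_left
    _ ≤ C ^ 2 * e1 * e2 * ε ^ 2 * Real.exp (K ^ 2) := by gcongr
    _ = C ^ 2 * ε ^ 2 * Real.exp (K ^ 2 * (σii + σjj + 2) / 2) := by
        have hx : Real.exp (K ^ 2 * (σii / 2)) * Real.exp (K ^ 2 * (σjj / 2)) * Real.exp (K ^ 2)
            = Real.exp (K ^ 2 * (σii + σjj + 2) / 2) := by
          rw [← Real.exp_add, ← Real.exp_add]; congr 1; ring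
        rw [he1, he2, ← hx]; ring
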